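/- arXiv:2010.12028 — 3 statements merged into one kernel-verified Lean document; each statement's English description precedes it below -/
import Mathlib

section
/- For every integer p ≥ 4, the density ρ_p = (3/(p−3))·((1/2) csc(π/(2p)) − 1) satisfies ρ_p < 3/π. -/
/-!
With `x = π / (2p)` the inequality is equivalent to `π < 2 sin x (p - 3 + π)`, and since
`2 x p = π` this says `π (x - sin x) < 2 (π - 3) x sin x`. For `x ≤ π / 8` the bound
`sin x ≥ x - x³/6` leaves the numerical inequality `π x / 6 < 2 (π - 3) (1 - x² / 6)`,
which holds with room to spare.
-/

open Real

lemma three_div_mul_half_inv_sub_one_lt_three_div_iff {P s c : ℝ} (hP : 3 < P) (hs : 0 < s)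
    (hc : 0 < c) : 3 / (P - 3) * (1 / 2 * s⁻¹ - 1) < 3 / c ↔ c < 2 * s * (P - 3 + c) := by
  have hP3 : 0 < P - 3 := sub_pos.2 hP
  rw [show 3 / (P - 3) * (1 / 2 * s⁻¹ - 1) = 3 * (1 - 2 * s) / (2 * s * (P - 3)) by
    field_simp, div_lt_div_iff₀ (by positivity) hc]
  constructor <;> intro h <;> linarith

lemma pi_mul_sq_div_six_lt {x : ℝ} (hx : 0 < x) (hx' : x ≤ 2 / 5) :
    π * x ^ 2 / 6 < 2 * (π - 3) * (x - x ^ 3 / 6) := by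
  nlinarith [pi_gt_d2, pi_lt_d2, mul_pos hx hx, mul_pos (mul_pos hx hx) (sub_pos.2 pi_lt_d2)]

lemma pi_lt_two_mul_sin_mul {P : ℝ} (hP : 4 ≤ P) : π < 2 * sin (π / (2 * P)) * (P - 3 + π) := by
  set x := π / (2 * P) with hx
  have hx0 : 0 < x := by positivity
  have hx25 : x ≤ 2 / 5 := by
    rw [hx, div_le_iff₀ (by positivity)]
    linarith [pi_lt_d2]
  have hxP : 2 * x * P = π := by rw [hx]; field_simp
  clear_value x
  calc π < 2 * (x - x ^ 3 / 6) * (P - 3 + π) := by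
        linear_combination pi_mul_sq_div_six_lt hx0 hx25 - (1 - x ^ 2 / 6) * hxP
    _ ≤ 2 * sin x * (P - 3 + π) := by
        gcongr
        · linarith [pi_gt_three]
        · exact sin_ge_sub_cube hx0.le

/-- The triangle-orbifold packing density is below the bound `3/π`. -/
theorem triangle_packing_density_lt (p : ℕ) (hp : 4 ≤ p) :
    (3 / ((p : ℝ) - 3)) * ((1 / 2) * (Real.sin (π / (2 * p)))⁻¹ - 1) < 3 / π := by
  have hP : (4 : ℝ) ≤ p := by exact_mod_cast hp
  have hsin : 0 < sin (π / (2 * p)) :=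
    sin_pos_of_pos_of_lt_pi (by positivity) (div_lt_self pi_pos (by linarith))
  exact (three_div_mul_half_inv_sub_one_lt_three_div_iff (by linarith) hsin pi_pos).2
    (pi_lt_two_mul_sin_mul hP)
end

section
/- The sequence p ↦ (3/(p−3))·((1/2) csc(π/(2p)) − 1) is strictly increasing for integers p ≥ 4. -/
/-! Clearing denominators, `simplexDensity p < simplexDensity (p + 1)` becomes
`(p - 2) csc (π / 2p) - (p - 3) csc (π / 2(p + 1)) < 2`. Since `csc x = 1/x + x/6 + O(x³)`, the
`1/x` terms contribute exactly `6/π ≈ 1.910`, the `x/6` terms at most `π/40`, and the cubic remainder,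
controlled by `x - x³/6 ≤ sin x ≤ x - x³/6 + x⁵/120`, at most `π³/7680`; the total stays below `2`. -/

open Real

namespace Real

theorem cos_le_one_sub_sq_div_two_add_pow_four (x : ℝ) : cos x ≤ 1 - x ^ 2 / 2 + x ^ 4 / 24 := by
  wlog hx : 0 ≤ x generalizing x
  · simpa [cos_neg, even_two.neg_pow, (by decide : Even 4).neg_pow] using this (-x) (by linarith)
  let f (t : ℝ) : ℝ := 1 - t ^ 2 / 2 + t ^ 4 / 24 - cos t
  have hderiv (t : ℝ) : deriv f t = sin t - (t - t ^ 3 / 6) := by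
    simp (disch := fun_prop) [f]
    ring
  have hmono : MonotoneOn f (Set.Ici 0) := by
    refine monotoneOn_of_deriv_nonneg (convex_Ici 0) (by fun_prop) (by fun_prop) fun t ht => ?_
    rw [interior_Ici] at ht
    linarith [hderiv t, sin_ge_sub_cube (le_of_lt ht)]
  have h0 : f 0 ≤ f x := hmono Set.self_mem_Ici hx hx
  simp only [f, cos_zero] at h0
  linarith

theorem sin_le_sub_cube_add_pow_five {x : ℝ} (hx : 0 ≤ x) :
    sin x ≤ x - x ^ 3 / 6 + x ^ 5 / 120 := by
  let f (t : ℝ) : ℝ := t - t ^ 3 / 6 + t ^ 5 / 120 - sin t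
  have hderiv (t : ℝ) : deriv f t = 1 - t ^ 2 / 2 + t ^ 4 / 24 - cos t := by
    simp (disch := fun_prop) [f]
    ring
  have hmono : MonotoneOn f (Set.Ici 0) := by
    refine monotoneOn_of_deriv_nonneg (convex_Ici 0) (by fun_prop) (by fun_prop) fun t _ => ?_
    linarith [hderiv t, cos_le_one_sub_sq_div_two_add_pow_four t]
  have h0 : f 0 ≤ f x := hmono Set.self_mem_Ici hx hx
  simp only [f, sin_zero] at h0
  linarith

theorem one_div_add_div_six_le_inv_sin {x : ℝ} (hx₀ : 0 < x) (hxπ : x < π) :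
    1 / x + x / 6 ≤ (sin x)⁻¹ := by
  have hsin := sin_pos_of_pos_of_lt_pi hx₀ hxπ
  rw [← one_div, le_div_iff₀ hsin]
  have hx_sq : x ^ 2 ≤ 14 := by nlinarith [pi_lt_d2]
  calc (1 / x + x / 6) * sin x ≤ (1 / x + x / 6) * (x - x ^ 3 / 6 + x ^ 5 / 120) := by
        gcongr
        exact sin_le_sub_cube_add_pow_five hx₀.le
    _ = 1 - x ^ 4 * (14 - x ^ 2) / 720 := by
        field_simp
        ring
    _ ≤ 1 := by
        have : 0 ≤ x ^ 4 * (14 - x ^ 2) := by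
          apply mul_nonneg <;> [positivity; linarith]
        linarith

theorem inv_sin_le_one_div_add_div_six_add_cube_div {x : ℝ} (hx₀ : 0 < x) (hx₁ : x ≤ 1) :
    (sin x)⁻¹ ≤ 1 / x + x / 6 + x ^ 3 / 30 := by
  have hcube : x ^ 3 ≤ x := by nlinarith [pow_le_one₀ hx₀.le hx₁ (n := 2)]
  have hsin : 0 < x - x ^ 3 / 6 := by linarith
  rw [← one_div, div_le_iff₀ (hsin.trans_le (sin_ge_sub_cube hx₀.le))]
  calc 1 ≤ 1 + x ^ 4 * (1 - x ^ 2) / 180 := by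
        have : 0 ≤ x ^ 4 * (1 - x ^ 2) := by
          apply mul_nonneg <;> [positivity; nlinarith]
        linarith
    _ = (1 / x + x / 6 + x ^ 3 / 30) * (x - x ^ 3 / 6) := by
        field_simp
        ring
    _ ≤ (1 / x + x / 6 + x ^ 3 / 30) * sin x := by
        gcongr
        exact sin_ge_sub_cube hx₀.le

end Real

noncomputable def simplexDensity (p : ℝ) : ℝ :=
  3 / (p - 3) * ((1 / 2) * (sin (π / (2 * p)))⁻¹ - 1)

lemma six_div_pi_add_lt_two : 6 / π + π / 12 * (3 / 10) + π ^ 3 / 240 * (1 / 32) < 2 := by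
  have h₁ : 6 / π < 6 / 3.14 := div_lt_div_of_pos_left (by norm_num) (by norm_num) pi_gt_d2
  have h₂ : π ^ 3 < 3.15 ^ 3 := pow_lt_pow_left₀ pi_lt_d2 pi_pos.le (by norm_num)
  nlinarith [pi_lt_d2]

lemma sub_mul_inv_sin_lt_two {P : ℝ} (hP : 4 ≤ P) :
    (P - 2) * (sin (π / (2 * P)))⁻¹ - (P - 3) * (sin (π / (2 * (P + 1))))⁻¹ < 2 := by
  have hπ := pi_lt_four
  have hx : π / (2 * P) ≤ 1 := by rw [div_le_one₀ (by positivity)]; linarith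
  have hy : π / (2 * (P + 1)) < π := div_lt_self pi_pos (by linarith)
  calc (P - 2) * (sin (π / (2 * P)))⁻¹ - (P - 3) * (sin (π / (2 * (P + 1))))⁻¹
      ≤ (P - 2) * (1 / (π / (2 * P)) + π / (2 * P) / 6 + (π / (2 * P)) ^ 3 / 30)
        - (P - 3) * (1 / (π / (2 * (P + 1))) + π / (2 * (P + 1)) / 6) := by
        gcongr
        · linarith
        · exact inv_sin_le_one_div_add_div_six_add_cube_div (by positivity) hx
        · linarith
        · exact one_div_add_div_six_le_inv_sin (by positivity) hy
    _ = 6 / π + π / 12 * ((2 * P - 2) / (P * (P + 1))) + π ^ 3 / 240 * ((P - 2) / P ^ 3) := by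
        field_simp
        ring
    _ ≤ 6 / π + π / 12 * (3 / 10) + π ^ 3 / 240 * (1 / 32) := by
        have e₁ : (2 * P - 2) / (P * (P + 1)) ≤ 3 / 10 := by
          rw [div_le_div_iff₀ (by positivity) (by norm_num)]
          nlinarith
        have e₂ : (P - 2) / P ^ 3 ≤ 1 / 32 := by
          rw [div_le_div_iff₀ (by positivity) (by norm_num)]
          nlinarith [mul_nonneg (sub_nonneg.2 hP) (by nlinarith : (0 : ℝ) ≤ P ^ 2 + 4 * P - 16)]
        gcongr
    _ < 2 := six_div_pi_add_lt_two

lemma simplexDensity_lt_add_one {P : ℝ} (hP : 4 ≤ P) :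
    simplexDensity P < simplexDensity (P + 1) := by
  have key := sub_mul_inv_sin_lt_two hP
  unfold simplexDensity
  rw [div_mul_eq_mul_div 3 (P - 3), div_mul_eq_mul_div 3 (P + 1 - 3),
    div_lt_div_iff₀ (by linarith) (by linarith)]
  linear_combination (3 / 2) * key

/-- The triangle-orbifold packing density is strictly increasing in `p` for `p ≥ 4`. -/
theorem triangle_packing_density_strictMono :
    StrictMonoOn (fun p : ℕ => (3 / ((p : ℝ) - 3)) * ((1 / 2) * (Real.sin (π / (2 * p)))⁻¹ - 1))
      (Set.Ici 4) := by
  refine strictMonoOn_of_lt_add_one Set.ordConnected_Ici fun p _ hp _ => ?_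
  have hP : (4 : ℝ) ≤ p := by exact_mod_cast hp
  simpa only [simplexDensity, Nat.cast_add_one] using simplexDensity_lt_add_one hP
end

section
/- In the hyperbolic triangle Δ with angles 0, π/3, π/2 (area π/6), the horoball centered at the ideal vertex and tangent to the opposite side covers area 1/2, giving local density (1/2)/(π/6) = 3/π. -/
open Real Set MeasureTheory

theorem integral_Ioi_one_div_sq {c : ℝ} (hc : 0 < c) :
    ∫ y in Ioi c, (1 : ℝ) / y ^ 2 = 1 / c := by
  have h_rpow : ∀ y ∈ Ioi c, (1 : ℝ) / y ^ 2 = y ^ (-2 : ℝ) := fun y hy => by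
    rw [rpow_neg (hc.trans hy).le, rpow_two, one_div]
  rw [setIntegral_congr_fun measurableSet_Ioi h_rpow, integral_Ioi_rpow_of_lt (by norm_num) hc]
  norm_num [rpow_neg_one]

/-- In the triangle `Δ` with angles `0, π/3, π/2` (half of the ideal triangle
with vertices `0, 1, ∞`), the horoball `{Im z ≥ 1}` covers area `1/2`, giving
local density `(1/2)/(π/6) = 3/π`. -/
theorem horoball_piece_area_in_half_triangle :
    (∫ x in (0 : ℝ)..(1 / 2), ∫ y in Set.Ioi (1 : ℝ), (1 : ℝ) / y ^ 2) = 1 / 2 ∧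
    (1 / 2 : ℝ) / (π / 6) = 3 / π := by
  refine ⟨?_, ?_⟩
  · rw [integral_Ioi_one_div_sq one_pos]
    norm_num
  · field_simp [pi_ne_zero]
    ring
end
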